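/- For any dictionary A and integer k > 1, the generalized coherence satisfies μ_k(A) ≤ (2k−1)·μ(A). -/

import Mathlib

/-- Generalized coherence of degree `k`. -/
noncomputable def genCoherence {m N : ℕ} (A : Fin N → EuclideanSpace ℝ (Fin m)) (k : ℕ) : ℝ :=
  sSup {r : ℝ | ∃ I J : Finset (Fin N), I.card ≤ k ∧ J.card ≤ k ∧ Disjoint I J ∧
    ∃ u ∈ Submodule.span ℝ (A '' I), ∃ v ∈ Submodule.span ℝ (A '' J),
      ‖u‖ = 1 ∧ ‖v‖ = 1 ∧ r = |(inner ℝ u v : ℝ)|}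

/-!
Write `u = ∑_{i ∈ I} aᵢ Aᵢ` and `w = ∑_{j ∈ J} bⱼ Aⱼ`. Since `I` and `J` are disjoint, every term of
`⟪u, w⟫` is off-diagonal, so `|⟪u, w⟫| ≤ μ ‖a‖₁ ‖b‖₁`. Expanding `‖u‖²` and bounding the
off-diagonal terms (Gershgorin) together with Cauchy–Schwarz `‖a‖₁² ≤ k ‖a‖₂²` gives
`(1 - (k - 1)μ) ‖a‖₁² ≤ k ‖u‖²`, hence `μ_k ≤ kμ / (1 - (k - 1)μ)` when `(k - 1)μ < 1`.
For `k ≥ 1` this is at most `(2k - 1)μ` as soon as `(2k - 1)μ ≤ 1`; otherwise the trivial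
bound `μ_k ≤ 1` suffices.
-/

open Finset
open scoped RealInnerProductSpace

variable {ι E : Type*} [NormedAddCommGroup E] [InnerProductSpace ℝ E]

theorem inner_sum_smul_sum_smul (v : ι → E) (I J : Finset ι) (a b : ι → ℝ) :
    ⟪∑ i ∈ I, a i • v i, ∑ j ∈ J, b j • v j⟫ =
      ∑ i ∈ I, ∑ j ∈ J, a i * b j * ⟪v i, v j⟫ := by
  rw [sum_inner]
  simp only [inner_sum, real_inner_smul_left, real_inner_smul_right]
  exact sum_congr rfl fun i _ => sum_congr rfl fun j _ => by ring

section Coherence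

variable {v : ι → E} {μ : ℝ}

theorem abs_mul_mul_inner_le_of_ne (hcoh : ∀ i j, i ≠ j → |⟪v i, v j⟫| ≤ μ)
    {i j : ι} (hij : i ≠ j) (x y : ℝ) :
    |x * y * ⟪v i, v j⟫| ≤ μ * (|x| * |y|) := by
  rw [abs_mul, abs_mul, mul_comm μ]
  exact mul_le_mul_of_nonneg_left (hcoh i j hij) (by positivity)

theorem abs_inner_sum_smul_le_of_disjoint (hcoh : ∀ i j, i ≠ j → |⟪v i, v j⟫| ≤ μ)
    {I J : Finset ι} (hIJ : Disjoint I J) (a b : ι → ℝ) :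
    |⟪∑ i ∈ I, a i • v i, ∑ j ∈ J, b j • v j⟫| ≤
      μ * ((∑ i ∈ I, |a i|) * ∑ j ∈ J, |b j|) := by
  rw [inner_sum_smul_sum_smul, sum_mul_sum, mul_sum]
  refine (abs_sum_le_sum_abs _ _).trans (sum_le_sum fun i hi => ?_)
  rw [mul_sum]
  refine (abs_sum_le_sum_abs _ _).trans (sum_le_sum fun j hj => ?_)
  exact abs_mul_mul_inner_le_of_ne hcoh (ne_of_mem_of_not_mem hi (disjoint_right.mp hIJ hj)) _ _

theorem sum_sq_sub_sq_sum_abs_le_norm_sum_smul_sq (hunit : ∀ i, ‖v i‖ = 1)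
    (hcoh : ∀ i j, i ≠ j → |⟪v i, v j⟫| ≤ μ) (I : Finset ι) (a : ι → ℝ) :
    (1 + μ) * ∑ i ∈ I, a i ^ 2 - μ * (∑ i ∈ I, |a i|) ^ 2 ≤ ‖∑ i ∈ I, a i • v i‖ ^ 2 := by
  classical
  have termwise : ∀ i j, (if i = j then (1 + μ) * a i ^ 2 else 0) - μ * (|a i| * |a j|) ≤
      a i * a j * ⟪v i, v j⟫ := by
    intro i j
    rcases eq_or_ne i j with rfl | hij
    · rw [if_pos rfl, real_inner_self_eq_norm_sq, hunit, abs_mul_abs_self]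
      linarith
    · rw [if_neg hij, zero_sub]
      exact neg_le_of_abs_le (abs_mul_mul_inner_le_of_ne hcoh hij _ _)
  calc (1 + μ) * ∑ i ∈ I, a i ^ 2 - μ * (∑ i ∈ I, |a i|) ^ 2
      = ∑ i ∈ I, ∑ j ∈ I,
          ((if i = j then (1 + μ) * a i ^ 2 else 0) - μ * (|a i| * |a j|)) := by
        simp only [sum_sub_distrib, sum_ite_eq, sum_ite_mem, inter_self, ← mul_sum, sq, sum_mul_sum]
    _ ≤ ∑ i ∈ I, ∑ j ∈ I, a i * a j * ⟪v i, v j⟫ :=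
        sum_le_sum fun i _ => sum_le_sum fun j _ => termwise i j
    _ = ‖∑ i ∈ I, a i • v i‖ ^ 2 := by
        rw [← inner_sum_smul_sum_smul, real_inner_self_eq_norm_sq]

theorem one_sub_mul_sq_sum_abs_le_norm_sum_smul_sq (hunit : ∀ i, ‖v i‖ = 1)
    (hcoh : ∀ i j, i ≠ j → |⟪v i, v j⟫| ≤ μ) (hμ : 0 ≤ μ) {k : ℕ} {I : Finset ι}
    (hI : #I ≤ k) (a : ι → ℝ) :
    (1 - (k - 1) * μ) * (∑ i ∈ I, |a i|) ^ 2 ≤ k * ‖∑ i ∈ I, a i • v i‖ ^ 2 := by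
  have hgersh := sum_sq_sub_sq_sum_abs_le_norm_sum_smul_sq hunit hcoh I a
  have hcs : (∑ i ∈ I, |a i|) ^ 2 ≤ k * ∑ i ∈ I, a i ^ 2 := by
    refine (sq_sum_le_card_mul_sum_sq (s := I) (f := fun i => |a i|)).trans ?_
    simp only [sq_abs]
    gcongr
  nlinarith [mul_le_mul_of_nonneg_left hgersh k.cast_nonneg]

theorem abs_inner_le_of_mem_span_of_disjoint (hunit : ∀ i, ‖v i‖ = 1)
    (hcoh : ∀ i j, i ≠ j → |⟪v i, v j⟫| ≤ μ) (hμ : 0 ≤ μ) {k : ℕ}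
    (hkμ : 0 < 1 - (k - 1) * μ) {I J : Finset ι} (hI : #I ≤ k) (hJ : #J ≤ k)
    (hIJ : Disjoint I J) {u w : E} (hu : u ∈ Submodule.span ℝ (v '' I))
    (hw : w ∈ Submodule.span ℝ (v '' J)) :
    |⟪u, w⟫| ≤ k * μ / (1 - (k - 1) * μ) * (‖u‖ * ‖w‖) := by
  obtain ⟨a, rfl⟩ := (Submodule.mem_span_image_finset_iff_exists_fun' ℝ).mp hu
  obtain ⟨b, rfl⟩ := (Submodule.mem_span_image_finset_iff_exists_fun' ℝ).mp hw
  set c := 1 - (k - 1) * μ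
  set Sa := ∑ i ∈ I, |a i|
  set Sb := ∑ j ∈ J, |b j|
  have hSS : c * (Sa * Sb) ≤ k * (‖∑ i ∈ I, a i • v i‖ * ‖∑ j ∈ J, b j • v j‖) := by
    have ha := one_sub_mul_sq_sum_abs_le_norm_sum_smul_sq hunit hcoh hμ hI a
    have hb := one_sub_mul_sq_sum_abs_le_norm_sum_smul_sq hunit hcoh hμ hJ b
    refine (pow_le_pow_iff_left₀ (by positivity) (by positivity) two_ne_zero).mp ?_
    calc (c * (Sa * Sb)) ^ 2 = (c * Sa ^ 2) * (c * Sb ^ 2) := by ring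
      _ ≤ (k * ‖∑ i ∈ I, a i • v i‖ ^ 2) * (k * ‖∑ j ∈ J, b j • v j‖ ^ 2) :=
          mul_le_mul ha hb (by positivity) (by positivity)
      _ = _ := by ring
  rw [div_mul_eq_mul_div, le_div_iff₀ hkμ]
  calc |⟪∑ i ∈ I, a i • v i, ∑ j ∈ J, b j • v j⟫| * c ≤ μ * (Sa * Sb) * c :=
        mul_le_mul_of_nonneg_right (abs_inner_sum_smul_le_of_disjoint hcoh hIJ a b) hkμ.le
    _ = μ * (c * (Sa * Sb)) := by ring
    _ ≤ μ * (k * (‖∑ i ∈ I, a i • v i‖ * ‖∑ j ∈ J, b j • v j‖)) := by gcongr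
    _ = _ := by ring

end Coherence

/-- For any dictionary `A` with coherence `μ` and integer `k > 1`, the generalized coherence
satisfies `μ_k(A) ≤ (2k - 1)·μ`. -/
theorem genCoherence_le_linear {m N : ℕ}
    (A : Fin N → EuclideanSpace ℝ (Fin m)) (k : ℕ) (μ : ℝ)
    (hk : 1 < k)
    (hunit : ∀ i, ‖A i‖ = 1)
    (hcoh : ∀ i j, i ≠ j → |(inner ℝ (A i) (A j) : ℝ)| ≤ μ)
    (hμ0 : 0 ≤ μ) :
    genCoherence A k ≤ (2 * (k : ℝ) - 1) * μ := by
  have hk1 : (1 : ℝ) ≤ k := by exact_mod_cast hk.le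
  refine Real.sSup_le ?_ (mul_nonneg (by linarith) hμ0)
  rintro _ ⟨I, J, hI, hJ, hIJ, u, hu, w, hw, hu1, hw1, rfl⟩
  rcases le_or_gt 1 ((2 * (k : ℝ) - 1) * μ) with hbig | hsmall
  · calc |⟪u, w⟫| ≤ ‖u‖ * ‖w‖ := abs_real_inner_le_norm u w
      _ ≤ (2 * (k : ℝ) - 1) * μ := by rwa [hu1, hw1, one_mul]
  · have hkμ : 0 < 1 - ((k : ℝ) - 1) * μ := by nlinarith
    calc |⟪u, w⟫| ≤ k * μ / (1 - ((k : ℝ) - 1) * μ) * (‖u‖ * ‖w‖) :=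
          abs_inner_le_of_mem_span_of_disjoint hunit hcoh hμ0 hkμ hI hJ hIJ hu hw
      _ ≤ (2 * (k : ℝ) - 1) * μ := by
          rw [hu1, hw1, mul_one, mul_one, div_le_iff₀ hkμ]
          nlinarith [mul_nonneg (mul_nonneg hμ0 (sub_nonneg.mpr hk1)) (sub_nonneg.mpr hsmall.le)]
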